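/- Let M_d = 0.051820 and define d^d on C ∪ F as M_d times the (unweighted) graph distance between blocks in the graph whose vertices are the blocks {7}, B1 = {1,2,3}, {d,4,5,6}, {a,b,c,e,f,g} and whose edges are 7–B1, B1–{d,4,5,6}, B1–{a,b,c,e,f,g}, {d,4,5,6}–7, {a,b,c,e,f,g}–7 (points in the same block are at distance 0). Then d^d is a pseudometric on C ∪ F, d^d is consistent with σ*, Σ_{j∈C} d^d(d,j) = 4·M_d > 0, and facility d minimizes Σ_{j∈C} d^d(o,j) over o ∈ F. -/
import Mathlib


/-- Points of the instance: `Sum.inl j` is client `j`, `Sum.inr i` is facility `i`. -/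
abbrev Pt := Fin 7 ⊕ Fin 7

/-- `d` is a pseudometric: nonnegative, symmetric, zero on the diagonal,
and satisfying the triangle inequality `d x y ≤ d x z + d y z`. -/
def IsPseudometric (d : Pt → Pt → ℝ) : Prop :=
  (∀ x y, 0 ≤ d x y) ∧ (∀ x y, d x y = d y x) ∧ (∀ x, d x x = 0) ∧
    (∀ x y z, d x y ≤ d x z + d y z)

/-- Rank function of the instance `I*` (facilities `a,…,g` are `0,…,6`):
clients 1,2,3 rank c ≻ e ≻ b ≻ a ≻ f ≻ g ≻ d, clients 4,5,6 rank
d ≻ g ≻ f ≻ a ≻ e ≻ b ≻ c, client 7 ranks b ≻ a ≻ f ≻ g ≻ e ≻ c ≻ d. -/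
def rkStar (j : Fin 7) : Fin 7 → ℕ :=
  if j.val ≤ 2 then ![3, 2, 0, 6, 1, 4, 5]
  else if j.val ≤ 5 then ![3, 5, 6, 0, 4, 2, 1]
  else ![1, 0, 5, 6, 4, 2, 3]

/-- The preference profile `σ*` of the instance `I*`: `a ≽_j b` iff `a` has
(weakly) smaller rank than `b` in client `j`'s list. -/
def sigmaStar (j : Fin 7) (a b : Fin 7) : Prop := rkStar j a ≤ rkStar j b

/-- `d` is consistent with the profile `σ`: whenever client `j` prefers `a` to `b`,
facility `a` is at least as close to `j` as `b`. -/
def Consistent (d : Pt → Pt → ℝ) (σ : Fin 7 → Fin 7 → Fin 7 → Prop) : Prop :=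
  ∀ j a b, σ j a b → d (Sum.inr a) (Sum.inl j) ≤ d (Sum.inr b) (Sum.inl j)

/-- Expected social cost of the distribution `q` under metric `d`. -/
def cost (d : Pt → Pt → ℝ) (q : Fin 7 → ℝ) : ℝ :=
  ∑ i, q i * ∑ j, d (Sum.inr i) (Sum.inl j)

/-- Total cost of the clients if facility `o` is chosen. -/
def facCost (d : Pt → Pt → ℝ) (o : Fin 7) : ℝ :=
  ∑ j, d (Sum.inr o) (Sum.inl j)

/-- Optimal (minimum) total cost over all facilities. -/
noncomputable def OPT (d : Pt → Pt → ℝ) : ℝ :=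
  Finset.univ.inf' Finset.univ_nonempty (facCost d)

/-- The block graph for `d^d`: vertices are the blocks
`0 = {7}`, `1 = B1 = {1,2,3}`, `2 = {d,4,5,6}`, `3 = {a,b,c,e,f,g}`,
with edges 7–B1, B1–{d,4,5,6}, B1–{a,b,c,e,f,g}, {d,4,5,6}–7, {a,b,c,e,f,g}–7. -/
def graphD : SimpleGraph (Fin 4) :=
  SimpleGraph.fromRel (fun u v =>
    (u, v) ∈ ([(0, 1), (1, 2), (1, 3), (2, 0), (3, 0)] :
      List (Fin 4 × Fin 4)))

/-- The block of each point (clients 1,2,3 ↦ B1, clients 4,5,6 ↦ {d,4,5,6},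
client 7 ↦ {7}; facility d ↦ {d,4,5,6}, all other facilities ↦ {a,b,c,e,f,g}). -/
def blkD : Pt → Fin 4
  | Sum.inl j => if j.val ≤ 2 then 1 else if j.val ≤ 5 then 2 else 0
  | Sum.inr i => ![3, 3, 3, 2, 3, 3, 3] i

/-- `d^d` is `M_d = 0.051820` times the graph distance between the blocks of the
two points (points in the same block are at distance 0). -/
noncomputable def dD : Pt → Pt → ℝ :=
  fun x y => 0.051820 * (graphD.dist (blkD x) (blkD y) : ℝ)


def Dmat : Fin 4 → Fin 4 → ℕ := ![![0,1,1,1],![1,0,1,1],![1,1,0,2],![1,1,2,0]]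

lemma adjD (u v : Fin 4) : graphD.Adj u v ↔
    (u ≠ v ∧ ((u,v) ∈ ([(0, 1), (1, 2), (1, 3), (2, 0), (3, 0)] : List (Fin 4 × Fin 4)) ∨
      (v,u) ∈ ([(0, 1), (1, 2), (1, 3), (2, 0), (3, 0)] : List (Fin 4 × Fin 4)))) := by
  rw [graphD, SimpleGraph.fromRel_adj]

lemma d23 : graphD.dist 2 3 = 2 := by
  have h20 : graphD.Adj 2 0 := by rw [adjD]; decide
  have h03 : graphD.Adj 0 3 := by rw [adjD]; decide
  let w : graphD.Walk 2 3 := SimpleGraph.Walk.cons h20 h03.toWalk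
  have hle : graphD.dist 2 3 ≤ 2 := SimpleGraph.dist_le w
  have hpos : 0 < graphD.dist 2 3 :=
    SimpleGraph.Reachable.pos_dist_of_ne ⟨w⟩ (by decide)
  have hne1 : graphD.dist 2 3 ≠ 1 := by
    intro h
    have := SimpleGraph.dist_eq_one_iff_adj.mp h
    rw [adjD] at this; exact absurd this (by decide)
  omega

lemma distD (u v : Fin 4) : graphD.dist u v = Dmat u v := by
  have h1 : ∀ a b : Fin 4, graphD.Adj a b → graphD.dist a b = 1 :=
    fun _ _ h => SimpleGraph.dist_eq_one_iff_adj.mpr h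
  fin_cases u <;> fin_cases v <;>
    first
    | exact SimpleGraph.dist_self
    | exact d23
    | exact SimpleGraph.dist_comm.trans d23
    | (apply h1; rw [adjD]; decide)

lemma keyD (x y : Pt) : dD x y = 0.051820 * (Dmat (blkD x) (blkD y) : ℝ) := by
  rw [dD, distD]

lemma triD : ∀ a b c : Fin 4, Dmat a b ≤ Dmat a c + Dmat b c := by decide

lemma facCostEq (o : Fin 7) :
    facCost dD o = 0.051820 * ((∑ j, Dmat (blkD (Sum.inr o)) (blkD (Sum.inl j)) : ℕ) : ℝ) := by
  rw [facCost]
  simp only [keyD]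
  rw [← Finset.mul_sum, Nat.cast_sum]

lemma facSum3 : (∑ j, Dmat (blkD (Sum.inr 3)) (blkD (Sum.inl j))) = 4 := by decide

lemma facSumMin : ∀ o : Fin 7,
    (∑ j, Dmat (blkD (Sum.inr 3)) (blkD (Sum.inl j))) ≤
      ∑ j, Dmat (blkD (Sum.inr o)) (blkD (Sum.inl j)) := by decide

lemma consD : ∀ j a b : Fin 7, rkStar j a ≤ rkStar j b →
    Dmat (blkD (Sum.inr a)) (blkD (Sum.inl j)) ≤ Dmat (blkD (Sum.inr b)) (blkD (Sum.inl j)) := by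
  decide

/-- `d^d` is a pseudometric consistent with `σ*`, the total client cost
of facility `d` is `4 · M_d > 0`, and `d` minimizes the total client cost. -/
theorem dD_certificate :
    IsPseudometric dD ∧ Consistent dD sigmaStar ∧
      facCost dD 3 = 4 * 0.051820 ∧ 0 < facCost dD 3 ∧
      ∀ o : Fin 7, facCost dD 3 ≤ facCost dD o := by
  refine ⟨⟨fun x y => ?_, fun x y => ?_, fun x => ?_, fun x y z => ?_⟩,
    fun j a b h => ?_, ?_, ?_, fun o => ?_⟩
  · rw [keyD]; positivity
  · rw [dD, dD, SimpleGraph.dist_comm]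
  · simp [dD, SimpleGraph.dist_self]
  · rw [keyD, keyD, keyD, ← mul_add]
    refine mul_le_mul_of_nonneg_left ?_ (by norm_num)
    exact_mod_cast triD (blkD x) (blkD y) (blkD z)
  · rw [keyD, keyD]
    refine mul_le_mul_of_nonneg_left ?_ (by norm_num)
    exact_mod_cast consD j a b h
  · rw [facCostEq, facSum3]; norm_num
  · rw [facCostEq, facSum3]; norm_num
  · rw [facCostEq, facCostEq]
    exact mul_le_mul_of_nonneg_left (Nat.cast_le.mpr (facSumMin o)) (by norm_num)
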